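/- Generalized q-Vandermonde: for positive integers k, m, n and a composition [λ_1,...,λ_m] of n with partial sums a_i = λ_1+...+λ_i, Σ_{k_1+...+k_m=k} q^{a_1 k_2 + a_2 k_3 + ... + a_{m-1} k_m - e_2(k_1,...,k_m)} Π_{i=1}^{m} [λ_i choose k_i]_q = [n choose k]_q, where e_2(k_1,...,k_m) = Σ_{i<j} k_i k_j and the outer sum is over all m-tuples of nonnegative integers summing to k. -/

import Mathlib

/-- The `q`-shifted factorial `(q;q)_n = (1-q)(1-q²)⋯(1-qⁿ)` in `ℚ(q)`. -/
noncomputable def qShiftedFactorial (n : ℕ) : RatFunc ℚ :=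
  ∏ j ∈ Finset.range n, (1 - RatFunc.X ^ (j + 1))

/-- The Gaussian (q-)binomial coefficient. -/
noncomputable def gaussBinom (n k : ℕ) : RatFunc ℚ :=
  if k ≤ n then qShiftedFactorial n / (qShiftedFactorial k * qShiftedFactorial (n - k)) else 0

/-!
Induction on the number of parts. Splitting off the first part `λ₀` and the first index `k₀`,
the exponent becomes `(λ₀ - k₀)(k - k₀)` plus the exponent of the remaining composition, so by
induction the inner sum collapses to `[λ₁ + ⋯ + λ_{m-1}, k - k₀]_q`, and the outer sum is the
two-part q-Vandermonde identity `[a + b, k]_q = ∑ⱼ q^{(a-j)(k-j)} [a, j]_q [b, k-j]_q`, which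
follows from q-Pascal by induction on `a`.
-/

open Finset RatFunc

lemma one_sub_X_pow_ne_zero {n : ℕ} (hn : 0 < n) : (1 - X ^ n : RatFunc ℚ) ≠ 0 := by
  have h := algebraMap_ne_zero (K := ℚ) (Polynomial.X_pow_sub_C_ne_zero hn 1)
  rw [map_sub, map_pow, algebraMap_X, algebraMap_C, map_one] at h
  rwa [← neg_sub, neg_ne_zero]

lemma qShiftedFactorial_ne_zero (n : ℕ) : qShiftedFactorial n ≠ 0 :=
  prod_ne_zero_iff.2 fun _ _ => one_sub_X_pow_ne_zero (Nat.succ_pos _)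

lemma qShiftedFactorial_zero : qShiftedFactorial 0 = 1 :=
  prod_range_zero _

lemma qShiftedFactorial_succ (n : ℕ) :
    qShiftedFactorial (n + 1) = qShiftedFactorial n * (1 - X ^ (n + 1)) :=
  prod_range_succ _ _

lemma gaussBinom_add_left (k d : ℕ) :
    gaussBinom (k + d) k =
      qShiftedFactorial (k + d) / (qShiftedFactorial k * qShiftedFactorial d) := by
  rw [gaussBinom, if_pos (Nat.le_add_right k d), Nat.add_sub_cancel_left]

lemma gaussBinom_zero_right (n : ℕ) : gaussBinom n 0 = 1 := by
  simp [gaussBinom, qShiftedFactorial_zero, qShiftedFactorial_ne_zero]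

lemma gaussBinom_self (n : ℕ) : gaussBinom n n = 1 := by
  simp [gaussBinom, qShiftedFactorial_zero, qShiftedFactorial_ne_zero]

lemma gaussBinom_of_lt {n k : ℕ} (h : n < k) : gaussBinom n k = 0 :=
  if_neg (not_le.2 h)

lemma gaussBinom_succ_succ (n k : ℕ) :
    gaussBinom (n + 1) (k + 1) = X ^ (k + 1) * gaussBinom n (k + 1) + gaussBinom n k := by
  rcases lt_trichotomy n k with h | rfl | h
  · rw [gaussBinom_of_lt (by omega), gaussBinom_of_lt (by omega), gaussBinom_of_lt h]
    ring
  · rw [gaussBinom_self, gaussBinom_self, gaussBinom_of_lt (Nat.lt_succ_self n)]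
    ring
  obtain ⟨d, rfl⟩ := Nat.exists_eq_add_of_lt h
  rw [show k + d + 1 + 1 = (k + 1 + d) + 1 by ring, show k + d + 1 = k + (d + 1) by ring,
    gaussBinom_add_left k, show k + (d + 1) = k + 1 + d by ring, gaussBinom_add_left,
    show k + 1 + d + 1 = (k + 1) + (d + 1) by ring, gaussBinom_add_left, ← add_assoc,
    qShiftedFactorial_succ (k + 1 + d), qShiftedFactorial_succ d, qShiftedFactorial_succ k]
  have hfac := qShiftedFactorial_ne_zero
  have hk := one_sub_X_pow_ne_zero k.succ_pos
  have hd := one_sub_X_pow_ne_zero d.succ_pos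
  field_simp
  ring

theorem gaussBinom_add_eq (a b k : ℕ) :
    gaussBinom (a + b) k =
      ∑ p ∈ antidiagonal k, X ^ (((a : ℤ) - p.1) * p.2) * gaussBinom a p.1 * gaussBinom b p.2 := by
  induction a generalizing k with
  | zero =>
    cases k with
    | zero => simp [gaussBinom_zero_right]
    | succ k =>
      rw [Nat.sum_antidiagonal_succ]
      simp [gaussBinom_zero_right, gaussBinom_of_lt]
  | succ a ih =>
    cases k with
    | zero => simp [gaussBinom_zero_right]
    | succ k =>
      rw [add_right_comm, gaussBinom_succ_succ, ih, ih, Nat.sum_antidiagonal_succ,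
        Nat.sum_antidiagonal_succ, mul_add, mul_sum, add_assoc, ← sum_add_distrib]
      congr 1
      · rw [gaussBinom_zero_right, gaussBinom_zero_right, ← zpow_natCast, ← mul_assoc,
          ← mul_assoc, ← zpow_add₀ X_ne_zero]
        push_cast
        ring_nf
      · refine sum_congr rfl fun p hp => ?_
        rw [HasAntidiagonal.mem_antidiagonal] at hp
        have shift : (X : RatFunc ℚ) ^ (((a : ℤ) - p.1) * p.2) * X ^ (p.1 + 1) =
            X ^ (k + 1) * X ^ (((a : ℤ) - (p.1 + 1 : ℕ)) * p.2) := by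
          simp only [← zpow_natCast, ← zpow_add₀ (X_ne_zero (K := ℚ)), ← hp]
          congr 1
          push_cast
          ring
        rw [gaussBinom_succ_succ,
          show ((a + 1 : ℕ) : ℤ) - (p.1 + 1 : ℕ) = a - p.1 by push_cast; ring]
        linear_combination -gaussBinom a (p.1 + 1) * gaussBinom b p.2 * shift

theorem Finset.Nat.sum_antidiagonalTuple_succ {M : Type*} [AddCommMonoid M] (m k : ℕ)
    (F : (Fin (m + 1) → ℕ) → M) :
    ∑ x ∈ Nat.antidiagonalTuple (m + 1) k, F x =
      ∑ p ∈ antidiagonal k, ∑ x ∈ Nat.antidiagonalTuple m p.2, F (Fin.cons p.1 x) := by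
  change (((List.Nat.antidiagonal k).flatMap fun p =>
      (List.Nat.antidiagonalTuple m p.2).map (Fin.cons p.1)).map F).sum =
    ((List.Nat.antidiagonal k).map fun p =>
      ((List.Nat.antidiagonalTuple m p.2).map fun x => F (Fin.cons p.1 x)).sum).sum
  simp [List.flatMap_def, List.sum_flatten, Function.comp_def]

def esymmTwo {m : ℕ} (kf : Fin m → ℕ) : ℕ :=
  ∑ p ∈ univ.filter (fun p : Fin m × Fin m => p.1 < p.2), kf p.1 * kf p.2

/-- The exponent `a₁k₂ + ⋯ + a_{m-1}k_m - e₂(k)`, with `λ` and `k` indexed from `0`, so that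
`aᵢ = λ₀ + ⋯ + λ_{i-1}` multiplies `kᵢ`. -/
def qVandermondeExponent {m : ℕ} (lam : ℕ → ℕ) (kf : Fin m → ℕ) : ℤ :=
  ∑ i : Fin m, (((∑ t ∈ range i, lam t) * kf i : ℕ) : ℤ) - (esymmTwo kf : ℤ)

lemma esymmTwo_cons {m : ℕ} (x : ℕ) (g : Fin m → ℕ) :
    esymmTwo (Fin.cons x g : Fin (m + 1) → ℕ) = x * ∑ i, g i + esymmTwo g := by
  simp only [esymmTwo, sum_filter, Fintype.sum_prod_type, Fin.sum_univ_succ, Fin.cons_zero,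
    Fin.cons_succ, Fin.succ_pos, Fin.succ_lt_succ_iff, Fin.not_lt_zero, if_true, if_false,
    mul_sum, zero_add]

lemma qVandermondeExponent_cons {m : ℕ} (lam : ℕ → ℕ) (x : ℕ) (g : Fin m → ℕ) :
    qVandermondeExponent lam (Fin.cons x g : Fin (m + 1) → ℕ) =
      ((lam 0 : ℤ) - x) * (∑ i, g i : ℕ) + qVandermondeExponent (fun t => lam (t + 1)) g := by
  simp only [qVandermondeExponent, esymmTwo_cons, Fin.sum_univ_succ, Fin.cons_zero,
    Fin.cons_succ, Fin.val_succ, Fin.val_zero, sum_range_succ', range_zero, sum_empty]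
  push_cast
  simp only [add_mul, sum_add_distrib, ← mul_sum]
  ring

theorem gaussBinom_sum_eq (m k : ℕ) (lam : ℕ → ℕ) :
    gaussBinom (∑ i ∈ range m, lam i) k =
      ∑ kf ∈ Nat.antidiagonalTuple m k,
        X ^ qVandermondeExponent lam kf * ∏ i : Fin m, gaussBinom (lam i) (kf i) := by
  induction m generalizing k lam with
  | zero =>
    cases k with
    | zero => simp [gaussBinom_zero_right, qVandermondeExponent, esymmTwo]
    | succ k => simp [gaussBinom_of_lt]
  | succ m ih =>
    rw [sum_range_succ', add_comm, gaussBinom_add_eq, Nat.sum_antidiagonalTuple_succ]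
    refine sum_congr rfl fun p _ => ?_
    rw [ih, mul_sum]
    refine sum_congr rfl fun g hg => ?_
    rw [qVandermondeExponent_cons, Nat.mem_antidiagonalTuple.1 hg, zpow_add₀ X_ne_zero,
      Fin.prod_univ_succ]
    simp only [Fin.cons_zero, Fin.cons_succ, Fin.val_succ, Fin.val_zero]
    ring

theorem generalized_q_vandermonde_general (k m n : ℕ)
    (lam : ℕ → ℕ)
    (hsum : ∑ i ∈ Finset.range m, lam i = n) :
    ∑ kf ∈ Finset.Nat.antidiagonalTuple m k,
        RatFunc.X ^
            ((∑ i : Fin m, ((∑ t ∈ Finset.range (i : ℕ), lam t) * kf i : ℕ) : ℤ) -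
              ((∑ p ∈ Finset.univ.filter (fun p : Fin m × Fin m => p.1 < p.2),
                  kf p.1 * kf p.2 : ℕ) : ℤ)) *
          ∏ i : Fin m, gaussBinom (lam i) (kf i) =
      gaussBinom n k := by
  rw [← hsum, gaussBinom_sum_eq]
  rfl

/-- Generalized q-Vandermonde (Corollary 4.1): for a composition `[λ₁,…,λ_m]` of `n`
with partial sums `a`,
`∑_{k₁+⋯+k_m=k} q^{a₁k₂+⋯+a_{m-1}k_m − e₂(k₁,…,k_m)} ∏ᵢ [λᵢ choose kᵢ]_q = [n choose k]_q`,
where the exponent is an integer (`q` is invertible in `ℚ(q)`). With 0-indexing,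
`a₁k₂+⋯+a_{m-1}k_m = ∑ᵢ (λ₀+⋯+λ_{i-1})·kᵢ`. -/
theorem generalized_q_vandermonde (k m n : ℕ) (hk : 0 < k) (hm : 0 < m) (hn : 0 < n)
    (lam : ℕ → ℕ) (hpos : ∀ i < m, 0 < lam i)
    (hsum : ∑ i ∈ Finset.range m, lam i = n) :
    ∑ kf ∈ Finset.Nat.antidiagonalTuple m k,
        RatFunc.X ^
            ((∑ i : Fin m, ((∑ t ∈ Finset.range (i : ℕ), lam t) * kf i : ℕ) : ℤ) -
              ((∑ p ∈ Finset.univ.filter (fun p : Fin m × Fin m => p.1 < p.2),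
                  kf p.1 * kf p.2 : ℕ) : ℤ)) *
          ∏ i : Fin m, gaussBinom (lam i) (kf i) =
      gaussBinom n k :=
  generalized_q_vandermonde_general k m n lam hsum
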